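/- arXiv:1911.09973 — 6 statements merged into one kernel-verified Lean document; each statement's English description precedes it below -/
import Mathlib

section
/- The infinite Thue word t = τ^ω(0), where τ(0)=012, τ(1)=02, τ(2)=1, is square-free. -/
/-- A word has a square if some nonempty `u` with `u ++ u` an infix. -/
def HasSquare (w : List (Fin 3)) : Prop :=
  ∃ u : List (Fin 3), u ≠ [] ∧ (u ++ u) <:+: w

def SquareFree (w : List (Fin 3)) : Prop := ¬ HasSquare w

/-- `u` occurs as a factor of the infinite word `x`. -/
def InfFactor (u : List (Fin 3)) (x : ℕ → Fin 3) : Prop :=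
  ∃ m : ℕ, ∀ i < u.length, u.getD i 0 = x (m + i)

def InfSquareFree (x : ℕ → Fin 3) : Prop :=
  ¬ ∃ u : List (Fin 3), u ≠ [] ∧ InfFactor (u ++ u) x

/-- A square-free word is irreducibly square-free if deleting any interior
letter creates a square. -/
def IrrSF (w : List (Fin 3)) : Prop :=
  SquareFree w ∧
    ∀ (w1 w2 : List (Fin 3)) (a : Fin 3),
      w = w1 ++ [a] ++ w2 → w1 ≠ [] → w2 ≠ [] → HasSquare (w1 ++ w2)

/-- The Thue morphism τ(0)=012, τ(1)=02, τ(2)=1. -/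
def tau : Fin 3 → List (Fin 3) := ![[0,1,2], [0,2], [1]]

def tauW (w : List (Fin 3)) : List (Fin 3) := w.flatMap tau

/-- The Thue word `t = τ^ω(0)`: the `n`-th letter of the fixed point of τ. -/
def thue (n : ℕ) : Fin 3 := ((tauW^[n+1]) [0]).getD n 0


/-! The Thue word is a coding of the Thue–Morse sequence `s`: its `n`-th letter is `1` when
`s n = s (n + 1)`, and otherwise tells `01` from `10`. A square `uu` with `|u| = q` in it therefore
forces `s i = s (i + q)` on `q + 1` consecutive positions: the equality propagates from letter
to letter, and it holds at the start, either because some letter is `0` or `2` (which pins `s`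
down) or because all letters are `1` (so `s` is constant there). That is an overlap in `s`, and
Thue–Morse is overlap-free: an even period halves, while an odd one forces `s` to alternate over
an odd number of steps, contradicting `s i = s (i + q)` at the start. -/

def thueMorse (n : ℕ) : Bool := n.bits.count true % 2 = 1

@[simp] lemma thueMorse_two_mul (n : ℕ) : thueMorse (2 * n) = thueMorse n := by
  rcases eq_or_ne n 0 with rfl | hn
  · rfl
  · simp [thueMorse, Nat.bit0_bits n hn]

@[simp] lemma thueMorse_two_mul_add_one (n : ℕ) : thueMorse (2 * n + 1) = !thueMorse n := by
  simp only [thueMorse, Nat.bit1_bits, List.count_cons_self]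
  cases h : decide (n.bits.count true % 2 = 1) <;> simp at h ⊢ <;> omega

lemma thueMorse_succ_ne_of_even {n : ℕ} (hn : Even n) : thueMorse (n + 1) ≠ thueMorse n := by
  obtain ⟨k, rfl⟩ := hn
  rw [← two_mul]
  simp

lemma thueMorse_add_two_mul (m j : ℕ) :
    thueMorse (m + 2 * j) = (thueMorse (m / 2 + j) ^^ (m % 2 == 1)) := by
  rcases Nat.even_or_odd' m with ⟨k, rfl | rfl⟩
  · rw [← mul_add]; simp
  · rw [show 2 * k + 1 + 2 * j = 2 * (k + j) + 1 by ring, thueMorse_two_mul_add_one]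
    simp [Nat.add_mod, show (2 * k + 1) / 2 = k by omega]

lemma apply_eq_apply_zero_of_succ_eq {α : Type*} {f : ℕ → α} {q : ℕ}
    (h : ∀ i < q, f (i + 1) = f i) : ∀ i ≤ q, f i = f 0 := by
  intro i hi
  induction i with
  | zero => rfl
  | succ i ih => rw [h i hi, ih (by omega)]

theorem thueMorse_not_overlap {q : ℕ} (hq : 0 < q) (m : ℕ) :
    ¬ ∀ i ≤ q, thueMorse (m + i) = thueMorse (m + q + i) := by
  induction q using Nat.strong_induction_on generalizing m with
  | _ q ih =>
  intro hover
  rcases Nat.even_or_odd' q with ⟨q', rfl | rfl⟩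
  · refine ih q' (by omega) (by omega) (m / 2) fun j hj => ?_
    have h := hover (2 * j) (by omega)
    rwa [add_assoc, ← mul_add, thueMorse_add_two_mul, thueMorse_add_two_mul, Bool.xor_left_inj,
      ← add_assoc] at h
  · have alternating : ∀ i < 2 * q' + 1, thueMorse (m + i + 1) = !thueMorse (m + i) := by
      intro i hi
      rw [Bool.eq_not_iff]
      rcases Nat.even_or_odd (m + i) with heven | hodd
      · exact thueMorse_succ_ne_of_even heven
      · have hshift : Even (m + (2 * q' + 1) + i) := by
          rw [add_right_comm]; exact hodd.add_odd (odd_two_mul_add_one q')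
        rw [hover i hi.le, show m + i + 1 = m + (i + 1) by ring, hover (i + 1) hi]
        exact thueMorse_succ_ne_of_even hshift
    have even_steps : ∀ j ≤ q', thueMorse (m + 2 * j) = thueMorse m :=
      apply_eq_apply_zero_of_succ_eq fun j hj => by
        rw [show m + 2 * (j + 1) = m + (2 * j + 1) + 1 by ring, alternating _ (by omega),
          ← add_assoc, alternating _ (by omega), Bool.not_not]
    have h := hover 0 (by omega)
    rw [add_zero, add_zero, ← add_assoc, alternating _ (by omega), even_steps q' le_rfl] at h
    exact Bool.not_ne_self _ h.symm

def thueCode (n : ℕ) : Fin 3 :=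
  if thueMorse n = thueMorse (n + 1) then 1 else if thueMorse n then 2 else 0

lemma thueCode_eq_one_iff (n : ℕ) : thueCode n = 1 ↔ thueMorse n = thueMorse (n + 1) := by
  unfold thueCode
  split_ifs <;> simp_all

lemma thueMorse_eq_of_thueCode_eq {a b : ℕ} (h : thueCode a = thueCode b)
    (ha : thueCode a ≠ 1) : thueMorse a = thueMorse b := by
  unfold thueCode at h ha
  split_ifs at h ha <;> simp_all

lemma thueMorse_eq_iff_succ_of_thueCode_eq {a b : ℕ} (h : thueCode a = thueCode b) :
    thueMorse a = thueMorse b ↔ thueMorse (a + 1) = thueMorse (b + 1) := by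
  have hab := (thueCode_eq_one_iff a).symm.trans (h ▸ thueCode_eq_one_iff b)
  revert hab
  cases thueMorse a <;> cases thueMorse b <;> cases thueMorse (a + 1) <;>
    cases thueMorse (b + 1) <;> simp

theorem thueMorse_overlap_of_thueCode_square {m q : ℕ}
    (hsq : ∀ i < q, thueCode (m + i) = thueCode (m + q + i)) :
    ∀ i ≤ q, thueMorse (m + i) = thueMorse (m + q + i) := by
  have hprop : ∀ i ≤ q, (thueMorse (m + i) = thueMorse (m + q + i)) =
      (thueMorse m = thueMorse (m + q)) :=
    apply_eq_apply_zero_of_succ_eq fun i hi =>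
      propext (thueMorse_eq_iff_succ_of_thueCode_eq (hsq i hi)).symm
  have hstart : thueMorse m = thueMorse (m + q) := by
    by_cases hone : ∀ i < q, thueCode (m + i) = 1
    · exact (apply_eq_apply_zero_of_succ_eq (f := fun i => thueMorse (m + i))
        (fun i hi => ((thueCode_eq_one_iff _).1 (hone i hi)).symm) q le_rfl).symm
    · push Not at hone
      obtain ⟨i, hi, hne⟩ := hone
      exact hprop i hi.le ▸ thueMorse_eq_of_thueCode_eq (hsq i hi) hne
  intro i hi
  rw [hprop i hi]
  exact hstart

/-- `τ` sends the `n`-th letter of the coded word to the positions from `blockStart n` up to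
`blockStart (n + 1)`. -/
def blockStart (n : ℕ) : ℕ := 2 * n + (thueMorse n).toNat

lemma blockStart_succ (n : ℕ) :
    blockStart (n + 1) = blockStart n + (tau (thueCode n)).length := by
  simp only [blockStart, thueCode]
  cases thueMorse n <;> cases thueMorse (n + 1) <;> simp [tau] <;> ring

lemma map_thueCode_block (n : ℕ) :
    (List.range (tau (thueCode n)).length).map (fun i => thueCode (blockStart n + i)) =
      tau (thueCode n) := by
  have h2 : thueMorse (2 * n + 2) = thueMorse (n + 1) := by
    rw [← thueMorse_two_mul (n + 1)]; ring_nf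
  have h3 : thueMorse (2 * n + 3) = !thueMorse (n + 1) := by
    rw [← thueMorse_two_mul_add_one (n + 1)]; ring_nf
  simp only [blockStart, thueCode]
  rcases Bool.eq_false_or_eq_true (thueMorse n) with hn | hn <;>
  rcases Bool.eq_false_or_eq_true (thueMorse (n + 1)) with hn' | hn' <;>
  simp [tau, List.range_succ, hn, hn', h2, h3, add_assoc]

lemma tauW_map_thueCode_range (n : ℕ) :
    tauW ((List.range n).map thueCode) = (List.range (blockStart n)).map thueCode := by
  induction n with
  | zero => rfl
  | succ n ih =>
    rw [blockStart_succ, List.range_add (n := blockStart n), List.map_append, List.map_map,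
      Function.comp_def, map_thueCode_block, ← ih]
    simp [tauW, List.range_succ]

lemma exists_iterate_tauW_eq (k : ℕ) :
    ∃ L, k < L ∧ tauW^[k] [0] = (List.range L).map thueCode := by
  induction k with
  | zero => exact ⟨1, one_pos, rfl⟩
  | succ k ih =>
    obtain ⟨L, hkL, hL⟩ := ih
    refine ⟨blockStart L, ?_, ?_⟩
    · unfold blockStart; omega
    · rw [Function.iterate_succ_apply', hL, tauW_map_thueCode_range]

lemma thue_eq_thueCode : thue = thueCode := by
  ext n
  obtain ⟨L, hL, heq⟩ := exists_iterate_tauW_eq (n + 1)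
  simp [thue, heq, List.getD_eq_getElem?_getD, show n < L by omega]

lemma InfFactor.periodic_of_append_self {u : List (Fin 3)} {x : ℕ → Fin 3}
    (h : InfFactor (u ++ u) x) : ∃ m, ∀ i < u.length, x (m + i) = x (m + u.length + i) := by
  obtain ⟨m, hm⟩ := h
  refine ⟨m, fun i hi => ?_⟩
  have h1 := hm i (by simp; omega)
  have h2 := hm (u.length + i) (by simp; omega)
  rw [List.getD_append _ _ _ _ hi] at h1
  rw [List.getD_append_right _ _ _ _ (by omega), Nat.add_sub_cancel_left, ← add_assoc] at h2
  rw [← h1, ← h2]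

theorem thue_squareFree : InfSquareFree thue := by
  rintro ⟨u, hu, hfactor⟩
  obtain ⟨m, hperiod⟩ := hfactor.periodic_of_append_self
  rw [thue_eq_thueCode] at hperiod
  exact thueMorse_not_overlap (List.length_pos_iff.2 hu) m
    (thueMorse_overlap_of_thueCode_square hperiod)
end

section
/- The Thue word t = τ^ω(0) does not contain 010 as a factor. -/
/-! Every letter `0` of `τ(w)` begins a block `τ(0) = 012` or `τ(1) = 02`, so in `τ(w)` a factor `01`
is always followed by `2` and `010` never occurs. Every finite prefix of `t` is a prefix of some
`τⁿ(0) = τ(τⁿ⁻¹(0))`, so a factor `010` of `t` would be a factor of an image of `τ`. -/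

theorem List.infix_of_getD_eq {α : Type*} {u l : List α} {d : α} {m : ℕ}
    (hlen : m + u.length ≤ l.length) (h : ∀ i < u.length, u.getD i d = l.getD (m + i) d) :
    u <:+: l := by
  refine List.infix_iff_getElem?.mpr ⟨m, by omega, fun i hi => ?_⟩
  have hi' : i + m < l.length := by omega
  rw [List.getElem?_eq_getElem hi', Option.some_inj, ← List.getD_eq_getElem _ d hi,
    ← List.getD_eq_getElem _ d hi', h i hi, Nat.add_comm]

theorem tauW_cons (a : Fin 3) (w : List (Fin 3)) : tauW (a :: w) = tau a ++ tauW w :=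
  List.flatMap_cons

theorem tauW_append (u v : List (Fin 3)) : tauW (u ++ v) = tauW u ++ tauW v :=
  List.flatMap_append

theorem iterate_tauW_append (n : ℕ) (u v : List (Fin 3)) :
    tauW^[n] (u ++ v) = tauW^[n] u ++ tauW^[n] v := by
  induction n generalizing u v with
  | zero => rfl
  | succ n ih => simp only [Function.iterate_succ_apply, tauW_append, ih]

theorem length_le_length_tauW (w : List (Fin 3)) : w.length ≤ (tauW w).length := by
  induction w with
  | nil => rfl
  | cons a w ih =>
    have ha : 1 ≤ (tau a).length := by fin_cases a <;> decide
    simp only [tauW_cons, List.length_append, List.length_cons]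
    omega

theorem exists_iterate_tauW_eq_cons (n : ℕ) : ∃ r, tauW^[n] [0] = 0 :: r := by
  induction n with
  | zero => exact ⟨[], rfl⟩
  | succ n ih =>
    obtain ⟨r, hr⟩ := ih
    exact ⟨1 :: 2 :: tauW r, by rw [Function.iterate_succ_apply', hr, tauW_cons]; rfl⟩

theorem lt_length_iterate_tauW (n : ℕ) : n < (tauW^[n] [0]).length := by
  induction n with
  | zero => decide
  | succ n ih =>
    obtain ⟨r, hr⟩ := exists_iterate_tauW_eq_cons n
    have hr_le := length_le_length_tauW r
    rw [hr, List.length_cons] at ih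
    rw [Function.iterate_succ_apply', hr, tauW_cons, List.length_append]
    change n + 1 < 3 + _
    omega

theorem iterate_tauW_prefix {m n : ℕ} (h : m ≤ n) : tauW^[m] [0] <+: tauW^[n] [0] := by
  obtain ⟨k, rfl⟩ := Nat.exists_eq_add_of_le h
  obtain ⟨r, hr⟩ := exists_iterate_tauW_eq_cons k
  rw [Function.iterate_add_apply, hr, show (0 :: r : List (Fin 3)) = [0] ++ r from rfl,
    iterate_tauW_append]
  exact List.prefix_append _ _

theorem thue_eq_getD_iterate {k n : ℕ} (h : k < n) : thue k = (tauW^[n] [0]).getD k 0 := by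
  obtain ⟨r, hr⟩ := iterate_tauW_prefix h
  rw [thue, ← hr, List.getD_append _ _ _ _ (k.lt_succ_self.trans (lt_length_iterate_tauW _))]

theorem not_infix_tauW (w : List (Fin 3)) : ¬ [0, 1, 0] <:+: tauW w := by
  induction w with
  | nil => decide
  | cons a w ih =>
    rw [tauW_cons]
    fin_cases a <;> simpa [tau, List.infix_cons_iff] using ih

theorem thue_avoids_010 : ¬ InfFactor [0, 1, 0] thue := by
  rintro ⟨m, hm⟩
  have hocc : [0, 1, 0] <:+: tauW^[m + 3] [0] :=
    List.infix_of_getD_eq (lt_length_iterate_tauW (m + 3)).le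
      fun i hi => (hm i hi).trans (thue_eq_getD_iterate (by simp at hi; omega))
  rw [Function.iterate_succ_apply'] at hocc
  exact not_infix_tauW _ hocc
end

section
/- There are no irreducibly square-free ternary words of length 4, 5, 7, or 12. -/
theorem hasSquare_iff_exists_tails_inits {w : List (Fin 3)} :
    HasSquare w ↔ ∃ t ∈ w.tails, ∃ u ∈ t.inits, u ≠ [] ∧ u ++ u <+: t := by
  simp only [HasSquare, List.mem_tails, List.mem_inits, List.infix_iff_prefix_suffix]
  constructor
  · rintro ⟨u, hu, t, hpre, hsuf⟩
    exact ⟨t, hsuf, u, (List.prefix_append u u).trans hpre, hu, hpre⟩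
  · rintro ⟨t, hsuf, u, -, hu, hpre⟩
    exact ⟨u, hu, t, hpre, hsuf⟩

instance : DecidablePred HasSquare := fun _ =>
  decidable_of_iff' _ hasSquare_iff_exists_tails_inits

instance : DecidablePred SquareFree := fun w => inferInstanceAs (Decidable ¬ HasSquare w)

theorem SquareFree.of_infix {v w : List (Fin 3)} (hw : SquareFree w) (h : v <:+: w) :
    SquareFree v :=
  fun ⟨u, hu, hv⟩ => hw ⟨u, hu, hv.trans h⟩

theorem squareFree_nil : SquareFree [] := by
  rintro ⟨u, hu, huu⟩
  simp_all [List.infix_nil]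

theorem irrSF_iff {w : List (Fin 3)} :
    IrrSF w ↔ SquareFree w ∧ ∀ j < w.length - 1, 0 < j → HasSquare (w.eraseIdx j) := by
  refine and_congr_right fun _ => ⟨fun H j hj h0 => ?_, ?_⟩
  · have hjw : j < w.length := by omega
    rw [List.eraseIdx_eq_take_drop_succ]
    refine H _ _ w[j] ?_ (List.ne_nil_of_length_pos (by simp; omega))
      (List.ne_nil_of_length_pos (by simp; omega))
    rw [List.append_assoc, List.singleton_append, ← List.drop_eq_getElem_cons hjw,
      List.take_append_drop]
  · rintro H w₁ w₂ a rfl h₁ h₂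
    have h₁ := List.length_pos_iff.mpr h₁
    have h₂ := List.length_pos_iff.mpr h₂
    simpa [List.eraseIdx_append_of_length_le] using H w₁.length (by simp; omega) h₁

instance : DecidablePred IrrSF := fun _ => decidable_of_iff' _ irrSF_iff

def squareFreeWords : ℕ → List (List (Fin 3))
  | 0 => [[]]
  | n + 1 => ((squareFreeWords n).flatMap fun w => (List.finRange 3).map (w ++ [·])).filter
      (SquareFree ·)

theorem mem_squareFreeWords {n : ℕ} {w : List (Fin 3)} :
    w ∈ squareFreeWords n ↔ w.length = n ∧ SquareFree w := by
  induction n generalizing w with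
  | zero => simpa [squareFreeWords] using fun h : w = [] => h ▸ squareFree_nil
  | succ n ih =>
    simp only [squareFreeWords, List.mem_filter, List.mem_flatMap, List.mem_map, ih,
      decide_eq_true_eq]
    refine ⟨fun ⟨⟨v, ⟨hv, _⟩, a, _, hw⟩, hsf⟩ => ⟨by simp [← hw, hv], hsf⟩,
      fun ⟨hlen, hsf⟩ => ⟨?_, hsf⟩⟩
    obtain ⟨v, a, rfl⟩ : ∃ v a, w = v ++ [a] := by
      simpa using w.eq_nil_or_concat.resolve_left (by rintro rfl; simp at hlen)
    exact ⟨v, ⟨by simpa using hlen, hsf.of_infix (List.prefix_append v [a]).isInfix⟩, a,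
      List.mem_finRange a, rfl⟩

theorem not_irrSF_of_mem_squareFreeWords :
    ∀ n ∈ [4, 5, 7, 12], ∀ w ∈ squareFreeWords n, ¬ IrrSF w := by
  decide +kernel

theorem no_irrSF_of_lengths_4_5_7_12 (w : List (Fin 3))
    (h : w.length = 4 ∨ w.length = 5 ∨ w.length = 7 ∨ w.length = 12) :
    ¬ IrrSF w := fun hw =>
  not_irrSF_of_mem_squareFreeWords w.length (by simpa using h) w
    (mem_squareFreeWords.mpr ⟨rfl, hw.1⟩) hw
end

section
/- The morphism φ defined by φ(0)=01202120102120210, φ(1)=12010201210201021, φ(2)=20121012021012102 preserves square-freeness: if w is square-free then φ(w) is square-free. -/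
/-- The uniform morphism φ of length 17. -/
def phi : Fin 3 → List (Fin 3) := ![[0,1,2,0,2,1,2,0,1,0,2,1,2,0,2,1,0], [1,2,0,1,0,2,0,1,2,1,0,2,0,1,0,2,1], [2,0,1,2,1,0,1,2,0,2,1,0,1,2,1,0,2]]

def phiW (w : List (Fin 3)) : List (Fin 3) := w.flatMap phi

open List

def SquareAt (w : List (Fin 3)) (s n : ℕ) : Prop :=
  0 < n ∧ s + 2 * n ≤ w.length ∧ ∀ i < n, w[s + i]? = w[s + n + i]?

namespace SquareAt

variable {w : List (Fin 3)} {s n : ℕ}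

theorem take_drop_eq (h : SquareAt w s n) {p m : ℕ} (hsp : s ≤ p) (hpm : p + m ≤ s + n) :
    (w.drop p).take m = (w.drop (p + n)).take m := by
  refine ext_getElem? fun i => ?_
  simp only [getElem?_take, getElem?_drop]
  split_ifs with hi
  · have := h.2.2 (p + i - s) (by omega)
    rwa [show s + (p + i - s) = p + i by omega, show s + n + (p + i - s) = p + n + i by omega] at this
  · rfl

theorem drop_take (h : SquareAt w s n) {p m : ℕ} (hps : p ≤ s) (hsm : s + 2 * n ≤ p + m) :
    SquareAt ((w.drop p).take m) (s - p) n := by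
  obtain ⟨hn, hlen, hper⟩ := h
  refine ⟨hn, by simp only [length_take, length_drop]; omega, fun i hi => ?_⟩
  simp only [getElem?_take, getElem?_drop]
  rw [if_pos (by omega), if_pos (by omega), show p + (s - p + i) = s + i by omega,
    show p + (s - p + n + i) = s + n + i by omega]
  exact hper i hi

end SquareAt

theorem hasSquare_iff_exists_squareAt (w : List (Fin 3)) :
    HasSquare w ↔ ∃ s n, SquareAt w s n := by
  constructor
  · rintro ⟨u, hu, p, q, rfl⟩
    refine ⟨p.length, u.length, length_pos_iff.2 hu, by simp only [append_assoc, length_append]; omega, fun i hi => ?_⟩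
    rw [Nat.add_assoc]
    simp [getElem?_append_right, getElem?_append_left, hi]
  · rintro ⟨s, n, hsq⟩
    refine ⟨(w.drop s).take n, ?_, ?_⟩
    · obtain ⟨hn, hlen, -⟩ := hsq
      simp only [ne_eq, take_eq_nil_iff, drop_eq_nil_iff]
      omega
    · have hsplit : (w.drop s).take (2 * n) = (w.drop s).take n ++ (w.drop s).take n := by
        rw [two_mul, take_add, drop_drop, ← hsq.take_drop_eq le_rfl le_rfl]
      rw [← hsplit]
      exact ((take_prefix _ _).isInfix).trans (drop_suffix _ _).isInfix

theorem HasSquare.mono {v w : List (Fin 3)} (h : HasSquare v) (hvw : v <:+: w) : HasSquare w :=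
  let ⟨u, hu, huv⟩ := h
  ⟨u, hu, huv.trans hvw⟩

theorem exists_squareAt_iff_replicate_infix {w : List (Fin 3)} {n : ℕ} (hn : 0 < n) :
    (∃ s, SquareAt w s n) ↔ replicate n true <:+: zipWith (· == ·) w (w.drop n) := by
  have hzip : ∀ s i, s + n + i < w.length →
      ((zipWith (· == ·) w (w.drop n))[i + s]? = some true ↔ w[s + i]? = w[s + n + i]?) := by
    intro s i hi
    rw [getElem?_zipWith, getElem?_drop, getElem?_eq_getElem (by omega : i + s < w.length),
      getElem?_eq_getElem (by omega : n + (i + s) < w.length),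
      getElem?_eq_getElem (by omega : s + i < w.length), getElem?_eq_getElem hi]
    simp only [Option.some.injEq, beq_iff_eq]
    constructor <;> intro h <;> convert h using 2 <;> omega
  rw [infix_iff_getElem?]
  simp only [length_replicate, length_zipWith, length_drop, getElem_replicate]
  constructor
  · rintro ⟨s, -, hlen, hper⟩
    exact ⟨s, by omega, fun i hi => (hzip s i (by omega)).2 (hper i hi)⟩
  · rintro ⟨s, hlen, hper⟩
    exact ⟨s, hn, by omega, fun i hi => (hzip s i (by omega)).1 (hper i hi)⟩

theorem hasSquare_iff_exists_replicate_infix (w : List (Fin 3)) :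
    HasSquare w ↔ ∃ n ∈ range' 1 (w.length / 2),
      replicate n true <:+: zipWith (· == ·) w (w.drop n) := by
  rw [hasSquare_iff_exists_squareAt, exists_comm]
  refine exists_congr fun n => ⟨fun ⟨s, hsq⟩ => ?_, fun ⟨hn, hinf⟩ => ?_⟩
  · have ⟨hn, hlen, _⟩ := hsq
    exact ⟨mem_range'_1.2 (by omega), (exists_squareAt_iff_replicate_infix hn).1 ⟨s, hsq⟩⟩
  · exact (exists_squareAt_iff_replicate_infix (mem_range'_1.1 hn).1).2 hinf

-- `decide` evaluates this search in the kernel far faster than one over `SquareAt w s n`.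
instance inst_s6 : DecidablePred HasSquare := fun w =>
  decidable_of_iff _ (hasSquare_iff_exists_replicate_infix w).symm

instance inst_s6_2 : DecidablePred SquareFree := fun w => inferInstanceAs (Decidable ¬HasSquare w)

section UniformFlatMap

variable {α β : Type*} {f : α → List β} {L : ℕ}

def IsSynchronizing (f : α → List β) (L : ℕ) : Prop :=
  ∀ a b c, ∀ t < L, 0 < t → ((f b ++ f c).drop t).take L ≠ f a

theorem length_flatMap_of_uniform (hf : ∀ a, (f a).length = L) (w : List α) :
    (w.flatMap f).length = L * w.length := by
  simp [length_flatMap, hf, mul_comm]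

theorem drop_flatMap_of_uniform (hf : ∀ a, (f a).length = L) (w : List α) (j : ℕ) :
    (w.flatMap f).drop (L * j) = (w.drop j).flatMap f := by
  induction w generalizing j with
  | nil => simp
  | cons a w ih =>
    cases j with
    | zero => simp
    | succ j =>
      rw [show L * (j + 1) = (f a).length + L * j by rw [hf]; ring, flatMap_cons, ← drop_drop,
        drop_left, ih, drop_succ_cons]

theorem take_flatMap_of_uniform (hf : ∀ a, (f a).length = L) (w : List α) (j : ℕ) :
    (w.flatMap f).take (L * j) = (w.take j).flatMap f := by
  induction w generalizing j with
  | nil => simp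
  | cons a w ih =>
    cases j with
    | zero => simp
    | succ j =>
      rw [show L * (j + 1) = (f a).length + L * j by rw [hf]; ring, flatMap_cons, take_add,
        take_left, drop_left, ih, take_succ_cons, flatMap_cons]

theorem getElem?_flatMap_of_uniform (hf : ∀ a, (f a).length = L) (w : List α)
    {i : ℕ} (hi : i < L) (j : ℕ) :
    (w.flatMap f)[L * j + i]? = w[j]?.bind fun a => (f a)[i]? := by
  rw [← getElem?_drop, drop_flatMap_of_uniform hf, ← head?_drop (l := w)]
  cases w.drop j with
  | nil => rfl
  | cons a v => simp [getElem?_append_left, hf, hi]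

end UniformFlatMap

section UniformMorphism

variable {f : Fin 3 → List (Fin 3)} {L : ℕ}

theorem SquareAt.pos_of_flatMap (hf : ∀ a, (f a).length = L) {w : List (Fin 3)} {s n : ℕ}
    (hsq : SquareAt (w.flatMap f) s n) : 0 < L := by
  obtain ⟨hn, hlen, -⟩ := hsq
  rw [length_flatMap_of_uniform hf] at hlen
  exact Nat.pos_of_ne_zero fun hL => by rw [hL, zero_mul] at hlen; omega

theorem SquareAt.dvd_of_isSynchronizing (hf : ∀ a, (f a).length = L) (hsync : IsSynchronizing f L)
    {w : List (Fin 3)} {s n : ℕ} (hsq : SquareAt (w.flatMap f) s n) (hn : 2 * L ≤ n) : L ∣ n := by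
  have hL := hsq.pos_of_flatMap hf
  have hlen := hsq.2.1
  rw [length_flatMap_of_uniform hf] at hlen
  -- the first block of `w.flatMap f` that lies inside the first half of the square
  set j := (s + L - 1) / L
  have hj : L * j + (s + L - 1) % L = s + L - 1 := Nat.div_add_mod _ _
  have hjs := Nat.mod_lt (s + L - 1) hL
  set j' := (L * j + n) / L
  set t := (L * j + n) % L
  have hj' : L * j' + t = L * j + n := Nat.div_add_mod _ _
  have ht : t < L := Nat.mod_lt _ hL
  refine Nat.dvd_of_mod_eq_zero ?_
  rw [← Nat.mul_add_mod_self_left L j n]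
  by_contra ht0
  have hjw : j < w.length := Nat.lt_of_mul_lt_mul_left (a := L) (by omega)
  have hjw' : j' + 1 < w.length := Nat.lt_of_mul_lt_mul_left (a := L) (by rw [mul_add]; omega)
  have hwj := drop_eq_getElem_cons hjw
  have hwj' := (drop_eq_getElem_cons (by omega : j' < w.length)).trans
    (congrArg _ (drop_eq_getElem_cons hjw'))
  have hblock : ((w.flatMap f).drop (L * j)).take L = f w[j] := by
    rw [drop_flatMap_of_uniform hf, hwj, flatMap_cons, take_left' (hf _)]
  have hshift : (w.flatMap f).drop (L * j + n) =
      (f w[j'] ++ f w[j' + 1]).drop t ++ (w.drop (j' + 2)).flatMap f := by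
    rw [← hj', ← drop_drop, drop_flatMap_of_uniform hf, hwj', flatMap_cons, flatMap_cons,
      ← append_assoc, drop_append_of_le_length (by simp only [length_append, hf]; omega)]
  refine hsync w[j] w[j'] w[j' + 1] t ht (Nat.pos_of_ne_zero ht0) ?_
  rw [← hblock, hsq.take_drop_eq (by omega) (by omega), hshift,
    take_append_of_le_length (by simp only [length_drop, length_append, hf]; omega)]

theorem SquareAt.hasSquare_of_dvd (hf : ∀ a, (f a).length = L)
    (hlast : Function.Injective fun a => (f a).getLast?) {w : List (Fin 3)} {s n : ℕ}
    (hsq : SquareAt (w.flatMap f) s n) (hdvd : L ∣ n) : HasSquare w := by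
  have hL := hsq.pos_of_flatMap hf
  obtain ⟨hn, hlen, hper⟩ := hsq
  rw [length_flatMap_of_uniform hf] at hlen
  obtain ⟨m, rfl⟩ := hdvd
  have hm : 0 < m := Nat.pos_of_mul_pos_left hn
  set j := s / L
  have hj : L * j + s % L = s := Nat.div_add_mod _ _
  have hjs := Nat.mod_lt s hL
  have hblockLast : ∀ k, (w.flatMap f)[L * k + (L - 1)]? = w[k]?.bind fun a => (f a).getLast? := by
    intro k
    simp only [getElem?_flatMap_of_uniform hf w (Nat.sub_lt hL one_pos), getLast?_eq_getElem?, hf]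
  rw [hasSquare_iff_exists_squareAt]
  refine ⟨j, m, hm, ?_, fun i hi => ?_⟩
  · refine Nat.le_of_mul_le_mul_left ?_ hL
    rw [show L * (j + 2 * m) = L * j + 2 * (L * m) by ring]
    omega
  have him : L * i + L ≤ L * m := by simpa [mul_add] using Nat.mul_le_mul_left L hi
  have hk : j + m + i < w.length :=
    Nat.lt_of_mul_lt_mul_left (a := L) (by rw [mul_add, mul_add]; omega)
  -- the last letters of the blocks `j + i` and `j + m + i`, one in each half of the square
  have hper' := hper (L * (j + i) + (L - 1) - s) (by rw [mul_add]; omega)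
  rw [show s + (L * (j + i) + (L - 1) - s) = L * (j + i) + (L - 1) by rw [mul_add]; omega,
    show s + L * m + (L * (j + i) + (L - 1) - s) = L * (j + m + i) + (L - 1) by
      rw [mul_add, mul_add, mul_add]; omega,
    hblockLast, hblockLast, getElem?_eq_getElem (by omega : j + i < w.length),
    getElem?_eq_getElem hk] at hper'
  rw [getElem?_eq_getElem (by omega : j + i < w.length), getElem?_eq_getElem hk]
  exact congrArg some (hlast hper')

theorem SquareAt.exists_infix_length_le_five (hf : ∀ a, (f a).length = L) {w : List (Fin 3)} {s n : ℕ}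
    (hsq : SquareAt (w.flatMap f) s n) (hn : n < 2 * L) :
    ∃ v, v <:+: w ∧ v.length ≤ 5 ∧ HasSquare (v.flatMap f) := by
  have hL := hsq.pos_of_flatMap hf
  set j := s / L
  have hj : L * j + s % L = s := Nat.div_add_mod _ _
  have hjs := Nat.mod_lt s hL
  refine ⟨(w.drop j).take 5, (take_prefix _ _).isInfix.trans (drop_suffix _ _).isInfix,
    length_take_le _ _, ?_⟩
  rw [hasSquare_iff_exists_squareAt, ← take_flatMap_of_uniform hf, ← drop_flatMap_of_uniform hf]
  exact ⟨_, _, hsq.drop_take (by omega) (by omega)⟩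

theorem squareFree_flatMap_of_isSynchronizing (hf : ∀ a, (f a).length = L)
    (hsync : IsSynchronizing f L) (hlast : Function.Injective fun a => (f a).getLast?)
    (hshort : ∀ v : List (Fin 3), v.length ≤ 5 → SquareFree v → SquareFree (v.flatMap f))
    {w : List (Fin 3)} (hw : SquareFree w) : SquareFree (w.flatMap f) := by
  rw [SquareFree, hasSquare_iff_exists_squareAt]
  rintro ⟨s, n, hsq⟩
  rcases lt_or_ge n (2 * L) with hn | hn
  · obtain ⟨v, hvw, hv, hsqv⟩ := hsq.exists_infix_length_le_five hf hn
    exact hshort v hv (fun h => hw (h.mono hvw)) hsqv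
  · exact hw (hsq.hasSquare_of_dvd hf hlast (hsq.dvd_of_isSynchronizing hf hsync hn))

end UniformMorphism

theorem length_phi (a : Fin 3) : (phi a).length = 17 := by
  fin_cases a <;> rfl

theorem isSynchronizing_phi : IsSynchronizing phi 17 := by
  unfold IsSynchronizing
  decide

theorem injective_getLast?_phi : Function.Injective fun a => (phi a).getLast? := by
  decide

theorem mem_sections_replicate_finRange {k : ℕ} (v : List (Fin k)) :
    v ∈ (replicate v.length (finRange k)).sections := by
  rw [mem_sections]
  induction v with
  | nil => exact .nil
  | cons a v ih => exact .cons (mem_finRange a) ih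

theorem squareFree_phiW_of_length_le_five (v : List (Fin 3)) (hv : v.length ≤ 5)
    (hsf : SquareFree v) : SquareFree (phiW v) := by
  have hcheck : ∀ n < 6, ∀ v ∈ (replicate n (finRange 3)).sections,
      SquareFree v → SquareFree (phiW v) := by
    decide +kernel
  exact hcheck v.length (by omega) v (mem_sections_replicate_finRange v) hsf

theorem phi_preserves_squareFree (w : List (Fin 3)) (h : SquareFree w) :
    SquareFree (phiW w) :=
  squareFree_flatMap_of_isSynchronizing length_phi isSynchronizing_phi injective_getLast?_phi
    squareFree_phiW_of_length_le_five h
end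

section
/- Let Φ = φ^ω(0) be the fixed point of the morphism φ(0)=01202120102120210, φ(1)=12010201210201021, φ(2)=20121012021012102, and let w be a nonempty suffix of φ(1) or of φ(2) with |w| < 17. Then the infinite word w·Φ is square-free. -/
/-- The infinite fixed point `Φ = φ^ω(0)`. -/
def Phi (n : ℕ) : Fin 3 := ((phiW^[n+1]) [0]).getD n 0

/-- Prepend a finite word to an infinite word. -/
def prepend (w : List (Fin 3)) (x : ℕ → Fin 3) (n : ℕ) : Fin 3 :=
  if n < w.length then w.getD n 0 else x (n - w.length)

lemma phi_length (c : Fin 3) : (phi c).length = 17 := by fin_cases c <;> rfl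

lemma phi_getD_zero (c : Fin 3) : (phi c).getD 0 0 = c := by fin_cases c <;> rfl

lemma phi_getD_last (c : Fin 3) : (phi c).getD 16 0 = c := by fin_cases c <;> rfl

lemma phi_getD_succ_ne : ∀ c : Fin 3, ∀ r < 16, (phi c).getD r 0 ≠ (phi c).getD (r + 1) 0 := by
  decide

lemma phiW_append (l l' : List (Fin 3)) : phiW (l ++ l') = phiW l ++ phiW l' :=
  List.flatMap_append

lemma length_phiW (l : List (Fin 3)) : (phiW l).length = 17 * l.length := by
  simp [phiW, phi_length, mul_comm]

lemma getD_phiW {l : List (Fin 3)} {q r : ℕ} (hq : q < l.length) (hr : r < 17) :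
    (phiW l).getD (17 * q + r) 0 = (phi (l.getD q 0)).getD r 0 := by
  induction l generalizing q with
  | nil => simp at hq
  | cons a l ih =>
    rw [show a :: l = [a] ++ l from rfl, phiW_append, show phiW [a] = phi a by simp [phiW]]
    rcases q with _ | q
    · simpa using List.getD_append _ _ _ _ (by rw [phi_length]; exact hr)
    · rw [List.getD_append_right _ _ _ _ (by rw [phi_length]; omega), phi_length,
        show 17 * (q + 1) + r - 17 = 17 * q + r by omega, ih (by simpa using hq)]
      simp

lemma List.IsPrefix.phiW {l l' : List (Fin 3)} (h : l <+: l') : phiW l <+: phiW l' := by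
  obtain ⟨t, rfl⟩ := h
  exact ⟨_root_.phiW t, (phiW_append l t).symm⟩

lemma phiW_iterate_prefix_succ (k : ℕ) : phiW^[k] [0] <+: phiW^[k + 1] [0] := by
  induction k with
  | zero => exact ⟨(phi 0).tail, rfl⟩
  | succ k ih =>
    rw [Function.iterate_succ_apply' phiW k, Function.iterate_succ_apply' phiW (k + 1)]
    exact ih.phiW

lemma phiW_iterate_prefix {j k : ℕ} (h : j ≤ k) : phiW^[j] [0] <+: phiW^[k] [0] := by
  induction h with
  | refl => exact List.prefix_rfl
  | step _ ih => exact ih.trans (phiW_iterate_prefix_succ _)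

lemma length_phiW_iterate (k : ℕ) : (phiW^[k] [0]).length = 17 ^ k := by
  induction k with
  | zero => rfl
  | succ k ih => rw [Function.iterate_succ_apply', length_phiW, ih, pow_succ, mul_comm]

lemma Phi_eq_getD_phiW_iterate {k n : ℕ} (hn : n < 17 ^ k) :
    Phi n = (phiW^[k] [0]).getD n 0 := by
  have hn' : n < 17 ^ (n + 1) := Nat.lt_pow_self (by norm_num) |>.trans
    (Nat.pow_lt_pow_succ (by norm_num))
  rw [← length_phiW_iterate] at hn hn'
  rw [Phi, List.getD_eq_getElem _ _ hn, List.getD_eq_getElem _ _ hn']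
  rcases le_total (n + 1) k with h | h
  · exact (phiW_iterate_prefix h).getElem hn'
  · exact ((phiW_iterate_prefix h).getElem hn).symm

def phiInf (x : ℕ → Fin 3) (n : ℕ) : Fin 3 := (phi (x (n / 17))).getD (n % 17) 0

lemma phiInf_mul_add (x : ℕ → Fin 3) (q : ℕ) {r : ℕ} (hr : r < 17) :
    phiInf x (17 * q + r) = (phi (x q)).getD r 0 := by
  simp [phiInf, Nat.mul_add_div, Nat.div_eq_of_lt hr, Nat.mod_eq_of_lt hr]

lemma phiInf_mul_add_sixteen (x : ℕ → Fin 3) (q : ℕ) : phiInf x (17 * q + 16) = x q := by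
  rw [phiInf_mul_add x q (by norm_num), phi_getD_last]

lemma phiInf_Phi : phiInf Phi = Phi := by
  funext n
  obtain ⟨q, r, hr, rfl⟩ : ∃ q r, r < 17 ∧ n = 17 * q + r :=
    ⟨n / 17, n % 17, Nat.mod_lt _ (by norm_num), (Nat.div_add_mod n 17).symm⟩
  have hq : q < 17 ^ q := Nat.lt_pow_self (by norm_num)
  have hn : 17 * q + r < 17 ^ (q + 1) := by rw [pow_succ]; omega
  rw [phiInf_mul_add _ _ hr, Phi_eq_getD_phiW_iterate hn, Function.iterate_succ_apply',
    getD_phiW (by rwa [length_phiW_iterate]) hr, ← Phi_eq_getD_phiW_iterate hq]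

lemma phiInf_eq_getD_phiW (x : ℕ → Fin 3) (j : ℕ) {k i : ℕ} (hi : i < 17 * k) :
    phiInf x (17 * j + i) = (phiW ((List.range k).map fun t => x (j + t))).getD i 0 := by
  obtain ⟨q, r, hr, rfl⟩ : ∃ q r, r < 17 ∧ i = 17 * q + r :=
    ⟨i / 17, i % 17, Nat.mod_lt _ (by norm_num), (Nat.div_add_mod i 17).symm⟩
  have hq : q < k := by omega
  rw [getD_phiW (by simpa using hq) hr, ← add_assoc, ← mul_add, phiInf_mul_add _ _ hr]
  simp [List.getD_eq_getElem?_getD, hq]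

lemma phiW_pair_aligned : ∀ b c d : Fin 3, ∀ t < 17,
    (∀ r < 17, (phiW [c, d]).getD (t + r) 0 = (phi b).getD r 0) → t = 0 := by
  decide

lemma dvd_of_phi_occurs_phiInf {x : ℕ → Fin 3} {b : Fin 3} {p : ℕ}
    (h : ∀ r < 17, phiInf x (p + r) = (phi b).getD r 0) : 17 ∣ p := by
  obtain ⟨j, t, ht, rfl⟩ : ∃ j t, t < 17 ∧ p = 17 * j + t :=
    ⟨p / 17, p % 17, Nat.mod_lt _ (by norm_num), (Nat.div_add_mod p 17).symm⟩
  suffices t = 0 by simp [this]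
  refine phiW_pair_aligned b (x j) (x (j + 1)) t ht fun r hr => ?_
  rw [← h r hr, add_assoc, phiInf_eq_getD_phiW x j (k := 2) (by omega)]
  simp [List.range_succ]

lemma phiInf_repetition_descent {x : ℕ → Fin 3} {m n l : ℕ} (hn : 33 ≤ n)
    (h : ∀ i < n, phiInf x (m + i) = phiInf x (m + l + i)) :
    17 ∣ l ∧ ∀ k, m ≤ 17 * k + 16 → 17 * k + 16 < m + n → x k = x (k + l / 17) := by
  set k₀ := (m + 16) / 17
  have hk₀ : m ≤ 17 * k₀ ∧ 17 * k₀ ≤ m + 16 := by omega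
  have hblock : ∀ r < 17, phiInf x (17 * k₀ + l + r) = (phi (x k₀)).getD r 0 := by
    intro r hr
    have := h (17 * k₀ + r - m) (by omega)
    rw [show m + (17 * k₀ + r - m) = 17 * k₀ + r by omega,
      show m + l + (17 * k₀ + r - m) = 17 * k₀ + l + r by omega, phiInf_mul_add _ _ hr] at this
    exact this.symm
  have hl : 17 ∣ l := (Nat.dvd_add_right (dvd_mul_right 17 k₀)).mp
    (dvd_of_phi_occurs_phiInf hblock)
  refine ⟨hl, fun k hk₁ hk₂ => ?_⟩
  obtain ⟨s, rfl⟩ := hl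
  have := h (17 * k + 16 - m) (by omega)
  rw [Nat.mul_div_cancel_left _ (by norm_num)]
  rwa [show m + (17 * k + 16 - m) = 17 * k + 16 by omega,
    show m + 17 * s + (17 * k + 16 - m) = 17 * (k + s) + 16 by omega,
    phiInf_mul_add_sixteen, phiInf_mul_add_sixteen] at this

lemma phiInf_succ_eq {x : ℕ → Fin 3} {n : ℕ} (h : phiInf x n = phiInf x (n + 1)) :
    n % 17 = 16 ∧ x (n / 17) = x (n / 17 + 1) := by
  obtain ⟨q, r, hr, rfl⟩ : ∃ q r, r < 17 ∧ n = 17 * q + r :=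
    ⟨n / 17, n % 17, Nat.mod_lt _ (by norm_num), (Nat.div_add_mod n 17).symm⟩
  rcases Nat.lt_or_ge r 16 with hr16 | hr16
  · rw [add_assoc, phiInf_mul_add _ _ hr, phiInf_mul_add _ _ (by omega)] at h
    exact absurd h (phi_getD_succ_ne _ _ hr16)
  · obtain rfl : r = 16 := by omega
    rw [phiInf_mul_add_sixteen, show 17 * q + 16 + 1 = 17 * (q + 1) + 0 by omega,
      phiInf_mul_add _ _ (by norm_num), phi_getD_zero] at h
    exact ⟨by omega, by rwa [show (17 * q + 16) / 17 = q by omega]⟩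

def HasSquareAt (x : ℕ → Fin 3) (m l : ℕ) : Prop := ∀ i < l, x (m + i) = x (m + l + i)

lemma infSquareFree_iff {x : ℕ → Fin 3} :
    InfSquareFree x ↔ ∀ m l, 0 < l → ¬ HasSquareAt x m l := by
  refine ⟨fun hx m l hl hsq => hx ⟨(List.range l).map fun i => x (m + i), ?_, m, ?_⟩, ?_⟩
  · simpa using hl.ne'
  · intro i hi
    simp only [List.length_append, List.length_map, List.length_range] at hi
    rcases Nat.lt_or_ge i l with hil | hil
    · rw [List.getD_append _ _ _ _ (by simpa using hil)]
      simp [List.getD_eq_getElem?_getD, hil]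
    · rw [List.getD_append_right _ _ _ _ (by simpa using hil)]
      have := hsq (i - l) (by omega)
      simp only [List.length_map, List.length_range] at this ⊢
      simp [List.getD_eq_getElem?_getD, show i - l < l by omega, this,
        show m + l + (i - l) = m + i by omega]
  · rintro h ⟨u, hu, m, hfac⟩
    refine h m u.length (List.length_pos_iff.mpr hu) fun i hi => ?_
    have h₁ := hfac i (by simp; omega)
    have h₂ := hfac (u.length + i) (by simp; omega)
    rw [List.getD_append _ _ _ _ hi] at h₁
    rw [List.getD_append_right _ _ _ _ (by omega), Nat.add_sub_cancel_left] at h₂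
    rw [← h₁, h₂, add_assoc]

-- A square of period `l < 33` starting in block `d` ends before block `d + 5`.
lemma phiW_five_no_short_square : ∀ g₀ g₁ g₂ g₃ g₄ : Fin 3,
    g₀ ≠ g₁ → g₁ ≠ g₂ → g₂ ≠ g₃ → g₃ ≠ g₄ → ∀ o < 17, ∀ l < 33, 0 < l →
    ¬ ∀ i < l, (phiW [g₀, g₁, g₂, g₃, g₄]).getD (o + i) 0 =
      (phiW [g₀, g₁, g₂, g₃, g₄]).getD (o + l + i) 0 := by
  decide +kernel

lemma exists_hasSquareAt_of_phiInf {x : ℕ → Fin 3} {m l : ℕ} (h : HasSquareAt (phiInf x) m l)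
    (hl : 0 < l) : (∃ k, x k = x (k + 1)) ∨ ∃ s, l = 17 * s ∧ HasSquareAt x (m / 17) s := by
  rcases Nat.lt_or_ge l 33 with hl33 | hl33
  · refine or_iff_not_imp_left.mpr fun hadj => ?_
    have hne : ∀ k, x k ≠ x (k + 1) := fun k he => hadj ⟨k, he⟩
    set d := m / 17
    have hwindow : ∀ i < 85, phiInf x (17 * d + i) =
        (phiW [x d, x (d + 1), x (d + 2), x (d + 3), x (d + 4)]).getD i 0 := fun i hi => by
      rw [phiInf_eq_getD_phiW x d (k := 5) (by omega)]
      simp [List.range_succ]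
    refine absurd (fun i hi => ?_) (phiW_five_no_short_square _ _ _ _ _ (hne d) (hne (d + 1))
      (hne (d + 2)) (hne (d + 3)) (m % 17) (Nat.mod_lt _ (by norm_num)) l hl33 hl)
    have hm : m = 17 * d + m % 17 := (Nat.div_add_mod m 17).symm
    rw [← hwindow _ (by omega), ← hwindow _ (by omega), ← add_assoc, ← hm,
      show 17 * d + (m % 17 + l + i) = m + l + i by omega]
    exact h i hi
  · obtain ⟨⟨s, rfl⟩, hx⟩ := phiInf_repetition_descent hl33 h
    refine .inr ⟨s, rfl, fun k hk => ?_⟩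
    have := hx (m / 17 + k) (by omega) (by omega)
    rwa [Nat.mul_div_cancel_left _ (by norm_num), add_right_comm] at this

lemma phiInf_infSquareFree {x : ℕ → Fin 3} (hx : InfSquareFree x) : InfSquareFree (phiInf x) := by
  rw [infSquareFree_iff] at hx ⊢
  intro m l hl h
  rcases exists_hasSquareAt_of_phiInf h hl with ⟨k, hk⟩ | ⟨s, rfl, hs⟩
  · exact hx k 1 one_pos fun i hi => by simpa [show i = 0 by omega] using hk
  · exact hx _ s (by omega) hs

lemma Phi_succ_ne (n : ℕ) : Phi n ≠ Phi (n + 1) := by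
  induction n using Nat.strong_induction_on with
  | _ n ih =>
    intro h
    rw [← phiInf_Phi] at h
    obtain ⟨hn, h⟩ := phiInf_succ_eq h
    exact ih (n / 17) (by omega) h

lemma Phi_infSquareFree : InfSquareFree Phi := by
  rw [infSquareFree_iff]
  intro m l hl h
  induction l using Nat.strong_induction_on generalizing m with
  | _ l ih =>
    rw [← phiInf_Phi] at h
    rcases exists_hasSquareAt_of_phiInf h hl with ⟨k, hk⟩ | ⟨s, rfl, hs⟩
    · exact Phi_succ_ne k hk
    · exact ih s (by omega) _ (by omega) hs

lemma InfSquareFree.comp_add {x : ℕ → Fin 3} (hx : InfSquareFree x) (d : ℕ) :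
    InfSquareFree fun n => x (n + d) := by
  rw [infSquareFree_iff] at hx ⊢
  refine fun m l hl h => hx (m + d) l hl fun i hi => ?_
  simpa only [add_right_comm _ d] using h i hi

lemma prepend_append_add_length (t w : List (Fin 3)) (x : ℕ → Fin 3) (n : ℕ) :
    prepend (t ++ w) x (n + t.length) = prepend w x n := by
  unfold prepend
  rw [List.length_append]
  by_cases hn : n < w.length
  · rw [if_pos (by omega), if_pos hn, List.getD_append_right _ _ _ _ (by omega), Nat.add_sub_cancel]
  · rw [if_neg (by omega), if_neg hn]
    congr 1
    omega

lemma prepend_singleton_succ (a : Fin 3) (x : ℕ → Fin 3) (n : ℕ) : prepend [a] x (n + 1) = x n := by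
  simp [prepend]

lemma phiInf_prepend_singleton (a : Fin 3) (x : ℕ → Fin 3) :
    phiInf (prepend [a] x) = prepend (phi a) (phiInf x) := by
  funext n
  obtain ⟨q, r, hr, rfl⟩ : ∃ q r, r < 17 ∧ n = 17 * q + r :=
    ⟨n / 17, n % 17, Nat.mod_lt _ (by norm_num), (Nat.div_add_mod n 17).symm⟩
  rw [phiInf_mul_add _ _ hr]
  rcases q with _ | q
  · simp [prepend, phi_length, hr]
  · rw [prepend_singleton_succ, prepend, if_neg (by rw [phi_length]; omega), phi_length,
      show 17 * (q + 1) + r - 17 = 17 * q + r by omega, phiInf_mul_add _ _ hr]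

lemma hasSquareAt_prepend_singleton_zero_iff {a : Fin 3} {x : ℕ → Fin 3} {t : ℕ} :
    HasSquareAt (prepend [a] x) 0 (t + 1) ↔ x t = a ∧ ∀ j < t, x j = x (j + t + 1) := by
  have hshift (j : ℕ) : t + 1 + (j + 1) = j + t + 1 + 1 := by omega
  simp only [HasSquareAt, zero_add]
  constructor
  · intro h
    refine ⟨?_, fun j hj => ?_⟩
    · simpa [prepend] using (h 0 t.succ_pos).symm
    · simpa only [hshift, prepend_singleton_succ] using h (j + 1) (by omega)
  · rintro ⟨h₁, h₂⟩ (_ | j) hj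
    · simpa [prepend] using h₁.symm
    · simpa only [hshift, prepend_singleton_succ] using h₂ j (by omega)

lemma InfSquareFree.prepend_singleton {x : ℕ → Fin 3} (hx : InfSquareFree x) {a : Fin 3}
    (h₀ : ∀ l, 0 < l → ¬ HasSquareAt (prepend [a] x) 0 l) : InfSquareFree (prepend [a] x) := by
  rw [infSquareFree_iff] at hx ⊢
  rintro (_ | m) l hl h
  · exact h₀ l hl h
  · refine hx m l hl fun i hi => ?_
    simpa only [add_right_comm _ 1, prepend_singleton_succ] using h i hi

lemma phiW_iterate_two_no_short_prefix_repeat : ∀ t < 33, (phiW^[2] [0]).getD t 0 ≠ 0 →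
    ¬ ∀ j < t, (phiW^[2] [0]).getD j 0 = (phiW^[2] [0]).getD (j + t + 1) 0 := by
  decide +kernel

lemma not_hasSquareAt_prepend_Phi_zero {a : Fin 3} (ha : a ≠ 0) {l : ℕ} (hl : 0 < l) :
    ¬ HasSquareAt (prepend [a] Phi) 0 l := by
  induction l using Nat.strong_induction_on with
  | _ l ih =>
    obtain ⟨t, rfl⟩ : ∃ t, l = t + 1 := ⟨l - 1, by omega⟩
    rw [hasSquareAt_prepend_singleton_zero_iff]
    rintro ⟨hta, hrep⟩
    rcases Nat.lt_or_ge t 33 with ht | ht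
    · have hP : ∀ n < 67, Phi n = (phiW^[2] [0]).getD n 0 :=
        fun n hn => Phi_eq_getD_phiW_iterate (by omega)
      refine phiW_iterate_two_no_short_prefix_repeat t ht (by rwa [← hP t (by omega), hta])
        fun j hj => ?_
      rw [← hP _ (by omega), ← hP _ (by omega), hrep j hj]
    · rw [← phiInf_Phi] at hrep
      obtain ⟨⟨s, hs⟩, hdesc⟩ := phiInf_repetition_descent (m := 0) (l := t + 1) ht
        fun i hi => by rw [zero_add, zero_add, add_comm (t + 1), ← add_assoc]; exact hrep i hi
      obtain ⟨s, rfl⟩ : ∃ s', s = s' + 1 := ⟨s - 1, by omega⟩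
      refine ih (s + 1) (by omega) s.succ_pos (hasSquareAt_prepend_singleton_zero_iff.mpr ⟨?_, ?_⟩)
      · rwa [← phiInf_Phi, show t = 17 * s + 16 by omega, phiInf_mul_add_sixteen] at hta
      · intro j hj
        rw [hdesc j (by omega) (by omega), hs, Nat.mul_div_cancel_left _ (by norm_num), add_assoc]

theorem suffix_prepend_squareFree_general (w : List (Fin 3)) (hsuf : w <:+ phi 1 ∨ w <:+ phi 2) :
    InfSquareFree (prepend w Phi) := by
  obtain ⟨a, ha, t, ht⟩ : ∃ a : Fin 3, a ≠ 0 ∧ w <:+ phi a := by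
    rcases hsuf with h | h
    exacts [⟨1, by decide, h⟩, ⟨2, by decide, h⟩]
  have hφa : InfSquareFree (prepend (phi a) Phi) := by
    rw [← phiInf_Phi, ← phiInf_prepend_singleton]
    exact phiInf_infSquareFree
      (Phi_infSquareFree.prepend_singleton fun l hl => not_hasSquareAt_prepend_Phi_zero ha hl)
  simpa only [← ht, prepend_append_add_length] using hφa.comp_add t.length

theorem suffix_prepend_squareFree (w : List (Fin 3)) (hne : w ≠ [])
    (hlen : w.length < 17) (hsuf : w <:+ phi 1 ∨ w <:+ phi 2) :
    InfSquareFree (prepend w Phi) :=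
  suffix_prepend_squareFree_general w hsuf
end

section
/- No 2-irreducibly square-free ternary word can end in 121: if w·121 is square-free with w nonempty, then deleting the factor 12 before the final 1 yields the square-free word w·1, so the occurrence of 12 is disposable. -/
/-- A square-free word is 2-irreducibly square-free if deleting any interior
factor of length 2 creates a square. -/
def TwoIrrSF (w : List (Fin 3)) : Prop :=
  SquareFree w ∧
    ∀ (w1 v w2 : List (Fin 3)), w = w1 ++ v ++ w2 → v.length = 2 →
      w1 ≠ [] → w2 ≠ [] → HasSquare (w1 ++ w2)

theorem no_2irrSF_ending_121 (w : List (Fin 3)) (hne : w ≠ [])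
    (hsf : SquareFree (w ++ [1, 2, 1])) :
    SquareFree (w ++ [1]) ∧ ¬ TwoIrrSF (w ++ [1, 2, 1]) := by
  have hpre : SquareFree (w ++ [1]) := by
    intro ⟨u, hu, hinf⟩
    exact hsf ⟨u, hu, hinf.trans ⟨[], [2,1], by simp⟩⟩
  refine ⟨hpre, fun h => ?_⟩
  exact hpre (h.2 w [1,2] [1] (by simp) rfl hne (by simp))
end
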